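/- arXiv:1007.3799 — 3 statements merged into one kernel-verified Lean document; each statement's English description precedes it below -/
import Mathlib

section
/- Let d be a positive integer and 0 < δ < 1. Suppose x_1, …, x_m is a sequence of points in ℝ^d (with the sup norm) such that ‖x_t‖_∞ ≤ 1 for every t, and such that for each t with 2 ≤ t ≤ m there exists a d-rectangle [a,b] containing all of x_1, …, x_{t−1} whose L∞-distance to x_t is at least δ. Then m ≤ 1 + 2d/δ. (This bounds the diameter of the concept class of d-dimensional axis-parallel rectangles with margin δ by O(d/δ).) -/
/-- Diameter bound for axis-parallel rectangles with margin δ.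
If points `x 1, …, x m` in `ℝ^d` (sup norm) all have `‖x t‖_∞ ≤ 1`, and each `x t`
(for `t ≥ 2`, i.e. index ≥ 1 in 0-based indexing) is at L∞-distance at least `δ`
from some axis-parallel rectangle containing all earlier points, then `m ≤ 1 + 2d/δ`. -/
theorem stmt_0 (d : ℕ) (hd : 0 < d) (δ : ℝ) (hδ0 : 0 < δ) (hδ1 : δ < 1)
    (m : ℕ) (x : Fin m → (Fin d → ℝ))
    (hnorm : ∀ t : Fin m, ‖x t‖ ≤ 1)
    (hsep : ∀ t : Fin m, 1 ≤ (t : ℕ) →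
      ∃ a b : Fin d → ℝ, (∀ i, a i ≤ b i) ∧
        (∀ s : Fin m, s < t → ∀ i, a i ≤ x s i ∧ x s i ≤ b i) ∧
        δ ≤ Metric.infDist (x t) {y : Fin d → ℝ | ∀ i, a i ≤ y i ∧ y i ≤ b i}) :
    (m : ℝ) ≤ 1 + 2 * d / δ := by
  rcases Nat.eq_zero_or_pos m with hm | hm
  · subst hm
    simp only [Nat.cast_zero]
    positivity
  -- extend x to ℕ by junk
  set x' : ℕ → Fin d → ℝ := fun n => if h : n < m then x ⟨n, h⟩ else 0 with hx'
  have hx'eq : ∀ (n : ℕ) (h : n < m), x' n = x ⟨n, h⟩ := by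
    intro n h; simp [hx', h]
  have hne : ∀ k : ℕ, (Finset.range (k + 1)).Nonempty := fun k => ⟨0, by simp⟩
  set U : ℕ → Fin d → ℝ := fun k i => (Finset.range (k + 1)).sup' (hne k) (fun s => x' s i)
    with hU
  set L : ℕ → Fin d → ℝ := fun k i => (Finset.range (k + 1)).inf' (hne k) (fun s => x' s i)
    with hL
  set Φ : ℕ → ℝ := fun k => ∑ i, (U k i - L k i) with hΦ
  have hUsucc : ∀ k i, U (k + 1) i = x' (k + 1) i ⊔ U k i := by
    intro k i
    simp only [hU, Finset.range_add_one]
    exact Finset.sup'_insert ⟨k, Finset.mem_insert_self k _⟩ _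
  have hLsucc : ∀ k i, L (k + 1) i = x' (k + 1) i ⊓ L k i := by
    intro k i
    simp only [hL, Finset.range_add_one]
    exact Finset.inf'_insert ⟨k, Finset.mem_insert_self k _⟩ _
  -- key step
  have hstep : ∀ k : ℕ, k + 1 < m → Φ k + δ ≤ Φ (k + 1) := by
    intro k hk
    set t : Fin m := ⟨k + 1, hk⟩ with ht
    obtain ⟨a, b, hab, hcont, hdist⟩ := hsep t (by simp [ht])
    set y : Fin d → ℝ := fun i => max (a i) (min (x t i) (b i)) with hy
    have hymem : y ∈ {y : Fin d → ℝ | ∀ i, a i ≤ y i ∧ y i ≤ b i} := by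
      intro i
      refine ⟨le_max_left _ _, max_le (hab i) (min_le_right _ _)⟩
    have hδd : δ ≤ dist (x t) y := le_trans hdist (Metric.infDist_le_dist_of_mem hymem)
    have hexists : ∃ i, δ ≤ |x t i - y i| := by
      by_contra h
      push_neg at h
      have : ‖x t - y‖ < δ := by
        rw [pi_norm_lt_iff hδ0]
        intro i
        simpa [Real.norm_eq_abs] using h i
      rw [dist_eq_norm] at hδd
      linarith
    obtain ⟨i, hi⟩ := hexists
    -- bounds on previous box from [a,b]
    have hUb : U k i ≤ b i := by
      apply Finset.sup'_le
      intro s hs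
      have hsk' : s < k + 1 := Finset.mem_range.mp hs
      have hsk : s < m := lt_trans hsk' hk
      rw [hx'eq s hsk]
      exact (hcont ⟨s, hsk⟩ (by simp [ht, Fin.lt_def]; omega) i).2
    have hLa : a i ≤ L k i := by
      apply Finset.le_inf'
      intro s hs
      have hsk' : s < k + 1 := Finset.mem_range.mp hs
      have hsk : s < m := lt_trans hsk' hk
      rw [hx'eq s hsk]
      exact (hcont ⟨s, hsk⟩ (by simp [ht, Fin.lt_def]; omega) i).1
    have hxt : x' (k + 1) = x t := hx'eq (k + 1) hk
    -- the gap in coordinate i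
    have hgap : (U k i - L k i) + δ ≤ U (k + 1) i - L (k + 1) i := by
      rcases lt_or_ge (b i) (x t i) with hcase | hcase
      · -- x t i > b i, so y i = b i
        have hyi : y i = b i := by
          simp only [hy]
          rw [min_eq_right (le_of_lt hcase), max_eq_right (hab i)]
        rw [hyi] at hi
        have : δ ≤ x t i - b i := by
          rcases abs_cases (x t i - b i) with ⟨h1, _⟩ | ⟨_, h2⟩ <;> linarith [hi]
        have h1 : U k i + δ ≤ U (k + 1) i := by
          rw [hUsucc, hxt]
          calc U k i + δ ≤ b i + δ := by linarith
            _ ≤ x t i := by linarith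
            _ ≤ x t i ⊔ U k i := le_sup_left
        have h2 : L (k + 1) i ≤ L k i := by rw [hLsucc]; exact inf_le_right
        linarith
      rcases lt_or_ge (x t i) (a i) with hcase2 | hcase2
      · -- x t i < a i, so y i = a i
        have hyi : y i = a i := by
          simp only [hy]
          rw [min_eq_left (le_trans (le_of_lt hcase2) (hab i)),
            max_eq_left (le_of_lt hcase2)]
        rw [hyi] at hi
        have : δ ≤ a i - x t i := by
          rcases abs_cases (x t i - a i) with ⟨h1, _⟩ | ⟨_, h2⟩ <;> linarith [hi]
        have h1 : L (k + 1) i + δ ≤ L k i := by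
          rw [hLsucc, hxt]
          calc (x t i ⊓ L k i) + δ ≤ x t i + δ := by
                have := inf_le_left (a := x t i) (b := L k i); linarith
            _ ≤ a i := by linarith
            _ ≤ L k i := hLa
        have h2 : U k i ≤ U (k + 1) i := by rw [hUsucc]; exact le_sup_right
        linarith
      · -- a i ≤ x t i ≤ b i : contradiction
        exfalso
        have hyi : y i = x t i := by
          simp only [hy]
          rw [min_eq_left hcase, max_eq_right hcase2]
        rw [hyi] at hi
        simp at hi
        linarith
    -- other coordinates don't decrease
    have hmono : ∀ j, 0 ≤ (U (k + 1) j - L (k + 1) j) - (U k j - L k j) := by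
      intro j
      have h1 : U k j ≤ U (k + 1) j := by rw [hUsucc]; exact le_sup_right
      have h2 : L (k + 1) j ≤ L k j := by rw [hLsucc]; exact inf_le_right
      linarith
    have hsum : δ ≤ ∑ j, ((U (k + 1) j - L (k + 1) j) - (U k j - L k j)) := by
      calc δ ≤ (U (k + 1) i - L (k + 1) i) - (U k i - L k i) := by linarith
        _ ≤ _ := Finset.single_le_sum (fun j _ => hmono j) (Finset.mem_univ i)
    have : Φ (k + 1) - Φ k = ∑ j, ((U (k + 1) j - L (k + 1) j) - (U k j - L k j)) := by
      simp [hΦ, Finset.sum_sub_distrib]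
    linarith
  -- induction: k * δ ≤ Φ k for k < m
  have hΦ0 : Φ 0 = 0 := by
    simp [hΦ, hU, hL]
  have hind : ∀ k : ℕ, k < m → (k : ℝ) * δ ≤ Φ k := by
    intro k
    induction k with
    | zero => intro _; simp [hΦ0]
    | succ n ih =>
      intro hn
      have h1 : (n : ℝ) * δ ≤ Φ n := ih (by omega)
      have h2 := hstep n hn
      push_cast
      linarith
  -- upper bound: Φ (m-1) ≤ 2d
  have hbound : Φ (m - 1) ≤ 2 * d := by
    have : ∀ i, U (m - 1) i - L (m - 1) i ≤ 2 := by
      intro i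
      have hU1 : U (m - 1) i ≤ 1 := by
        apply Finset.sup'_le
        intro s hs
        have hsm : s < m := by have := Finset.mem_range.mp hs; omega
        rw [hx'eq s hsm]
        calc x ⟨s, hsm⟩ i ≤ |x ⟨s, hsm⟩ i| := le_abs_self _
          _ ≤ ‖x ⟨s, hsm⟩‖ := by
              simpa [Real.norm_eq_abs] using norm_le_pi_norm (x ⟨s, hsm⟩) i
          _ ≤ 1 := hnorm _
      have hL1 : -1 ≤ L (m - 1) i := by
        apply Finset.le_inf'
        intro s hs
        have hsm : s < m := by have := Finset.mem_range.mp hs; omega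
        rw [hx'eq s hsm]
        have : |x ⟨s, hsm⟩ i| ≤ 1 := by
          calc |x ⟨s, hsm⟩ i| ≤ ‖x ⟨s, hsm⟩‖ := by
                simpa [Real.norm_eq_abs] using norm_le_pi_norm (x ⟨s, hsm⟩) i
            _ ≤ 1 := hnorm _
        linarith [neg_abs_le (x ⟨s, hsm⟩ i)]
      linarith
    calc Φ (m - 1) ≤ ∑ _i : Fin d, (2 : ℝ) := Finset.sum_le_sum (fun i _ => this i)
      _ = 2 * d := by simp [mul_comm]
  -- conclude
  have hmain : ((m : ℝ) - 1) * δ ≤ 2 * d := by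
    have h1 := hind (m - 1) (by omega)
    have hc : ((m - 1 : ℕ) : ℝ) = (m : ℝ) - 1 := by
      rw [Nat.cast_sub hm]; simp
    rw [hc] at h1
    linarith
  have : (m : ℝ) - 1 ≤ 2 * d / δ := by
    rw [le_div_iff₀ hδ0]
    linarith
  linarith
end

section
/- Let d be a positive integer and δ > 0. Suppose x_1, …, x_m is a sequence of points of d-dimensional Euclidean space with ‖x_t‖₂ ≤ 1 for every t, and suppose that for all indices s < t there exist u, w in the space with ‖u‖₂ ≤ 1, ‖w‖₂ = 1, ⟨w, x_t + u⟩ ≥ δ and ⟨w, x_s + u⟩ < −δ. Then m ≤ (1 + 1/δ)^d. (This bounds the diameter of the concept class of d-dimensional hyperplanes with margin δ.) -/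
/-!
A unit vector `w` with `⟪w, x t + u⟫ ≥ δ > -δ > ⟪w, x s + u⟫` puts `x s` and `x t` more than `2δ`
apart, so the open `δ`-balls around the points are pairwise disjoint. They all lie in the ball of
radius `1 + δ` about the origin, and comparing Haar volumes gives `m δ^d ≤ (1 + δ)^d`.
-/

open scoped RealInnerProductSpace
open MeasureTheory Metric Module

theorem two_mul_lt_dist_of_inner_margin {F : Type*} [NormedAddCommGroup F] [InnerProductSpace ℝ F]
    {a b u w : F} {δ : ℝ} (hw : ‖w‖ ≤ 1) (ha : δ ≤ ⟪w, a + u⟫) (hb : ⟪w, b + u⟫ < -δ) :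
    2 * δ < dist a b :=
  calc 2 * δ < ⟪w, a + u⟫ - ⟪w, b + u⟫ := by linarith
    _ = ⟪w, a - b⟫ := by rw [← inner_sub_right, add_sub_add_right_eq_sub]
    _ ≤ ‖w‖ * ‖a - b‖ := real_inner_le_norm w _
    _ ≤ dist a b := by rw [dist_eq_norm]; exact mul_le_of_le_one_left (norm_nonneg _) hw

theorem card_mul_pow_finrank_le_of_pairwise_dist {E ι : Type*} [NormedAddCommGroup E]
    [NormedSpace ℝ E] [FiniteDimensional ℝ E] [Fintype ι] {x : ι → E} {r R : ℝ}
    (hr : 0 < r) (hR : 0 ≤ R) (hx : ∀ i, ‖x i‖ ≤ R)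
    (hsep : Pairwise fun i j => 2 * r ≤ dist (x i) (x j)) :
    Fintype.card ι * r ^ finrank ℝ E ≤ (R + r) ^ finrank ℝ E := by
  borelize E
  set μ : Measure E := Measure.addHaar
  have hdisj : Pairwise (Function.onFun Disjoint fun i => ball (x i) r) := fun i j hij =>
    ball_disjoint_ball (by linarith [hsep hij])
  have hsub : (⋃ i, ball (x i) r) ⊆ ball 0 (R + r) := by
    simp only [Set.iUnion_subset_iff]
    exact fun i => ball_subset_ball' (by rw [dist_zero_right]; linarith [hx i])
  have hvol : Fintype.card ι * μ (ball 0 r) ≤ μ (ball 0 (R + r)) :=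
    calc Fintype.card ι * μ (ball 0 r) = ∑ i, μ (ball (x i) r) := by
          simp [Measure.addHaar_ball_center]
      _ = μ (⋃ i, ball (x i) r) := by
          rw [measure_iUnion hdisj fun _ => measurableSet_ball, tsum_fintype]
      _ ≤ μ (ball 0 (R + r)) := measure_mono hsub
  rwa [Measure.addHaar_ball_of_pos μ 0 hr,
    Measure.addHaar_ball_of_pos μ 0 (by linarith : 0 < R + r), ← mul_assoc,
    ENNReal.mul_le_mul_iff_left (measure_ball_pos μ 0 one_pos).ne' measure_ball_lt_top.ne,
    ← ENNReal.ofReal_natCast, ← ENNReal.ofReal_mul (by positivity),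
    ENNReal.ofReal_le_ofReal_iff (by positivity)] at hvol

theorem stmt_3_general (d : ℕ) (δ : ℝ) (hδ : 0 < δ)
    (m : ℕ) (x : Fin m → EuclideanSpace ℝ (Fin d))
    (hnorm : ∀ t, ‖x t‖ ≤ 1)
    (hsep : ∀ s t : Fin m, s < t →
      ∃ u w : EuclideanSpace ℝ (Fin d), ‖u‖ ≤ 1 ∧ ‖w‖ = 1 ∧
        δ ≤ ⟪w, x t + u⟫ ∧ ⟪w, x s + u⟫ < -δ) :
    (m : ℝ) ≤ (1 + 1 / δ) ^ d := by
  have hdist {s t : Fin m} (hst : s < t) : 2 * δ ≤ dist (x t) (x s) := by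
    obtain ⟨u, w, -, hw, ht, hs⟩ := hsep s t hst
    exact (two_mul_lt_dist_of_inner_margin hw.le ht hs).le
  have hpack := card_mul_pow_finrank_le_of_pairwise_dist hδ zero_le_one hnorm fun s t hst => by
    rcases hst.lt_or_gt with h | h
    · rw [dist_comm]; exact hdist h
    · exact hdist h
  rw [Fintype.card_fin, finrank_euclideanSpace_fin] at hpack
  rwa [one_add_div hδ.ne', div_pow, le_div_iff₀ (by positivity), add_comm]

/-- Diameter bound for hyperplanes with margin δ. If `x 1, …, x m` in
`d`-dimensional Euclidean space satisfy `‖x t‖ ≤ 1` for all `t`, and for all `s < t`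
there exist `u, w` with `‖u‖ ≤ 1`, `‖w‖ = 1`, `⟪w, x t + u⟫ ≥ δ` and
`⟪w, x s + u⟫ < -δ`, then `m ≤ (1 + 1/δ)^d`. -/
theorem stmt_3 (d : ℕ) (hd : 0 < d) (δ : ℝ) (hδ : 0 < δ)
    (m : ℕ) (x : Fin m → EuclideanSpace ℝ (Fin d))
    (hnorm : ∀ t, ‖x t‖ ≤ 1)
    (hsep : ∀ s t : Fin m, s < t →
      ∃ u w : EuclideanSpace ℝ (Fin d), ‖u‖ ≤ 1 ∧ ‖w‖ = 1 ∧
        δ ≤ ⟪w, x t + u⟫ ∧ ⟪w, x s + u⟫ < -δ) :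
    (m : ℝ) ≤ (1 + 1 / δ) ^ d :=
  stmt_3_general d δ hδ m x hnorm hsep
end

section
/- Let d be a positive integer and δ > 0. Let N be a nonempty finite set of points of d-dimensional Euclidean space, each of Euclidean norm at most 1, and let x be a point of Euclidean norm at most 1. Then the Euclidean distance from x to the convex hull of N is at most 2δ if and only if there exist NO u, w in the space with ‖u‖₂ ≤ 1, ‖w‖₂ = 1, ⟨w, x + u⟩ ≥ δ, and ⟨w, y + u⟩ < −δ for all y ∈ N. (Equivalently, for the class of d-dimensional hyperplanes with margin δ, the safe region S_F(N) equals the intersection of the unit ball with the 2δ-neighborhood of the convex hull of N.) -/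
/-!
The distance from `x` to a compact convex set `K` exceeds `r ≥ 0` exactly when some unit vector
`w` satisfies `⟪w, y⟫ + r < ⟪w, x⟫` on `K`: one direction is Cauchy–Schwarz at a nearest point,
the other takes `w` along `x - v` for the nearest point `v`, which supports `K` by the variational
inequality of the projection. For `K` the convex hull of `N` this condition only has to be
checked on `N`. A margin-`δ` hyperplane `(u, w)` separating `x` from `N` is such a `w` for
`r = 2δ` together with an offset `⟪w, u⟫ ∈ [-1, 1]`, and the offset `δ - ⟪w, x⟫` always works
because all points lie in the unit ball.
-/

open scoped RealInnerProductSpace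

variable {E : Type*} [NormedAddCommGroup E] [InnerProductSpace ℝ E]

theorem forall_mem_convexHull_inner_add_lt_iff {s : Set E} {w x : E} {r : ℝ} :
    (∀ y ∈ convexHull ℝ s, ⟪w, y⟫ + r < ⟪w, x⟫) ↔ ∀ y ∈ s, ⟪w, y⟫ + r < ⟪w, x⟫ := by
  refine ⟨fun h y hy ↦ h y (subset_convexHull ℝ s hy), fun h ↦ ?_⟩
  have hconv : Convex ℝ {y : E | ⟪w, y⟫ + r < ⟪w, x⟫} := by
    simpa only [← lt_sub_iff_add_lt] using
      convex_halfSpace_lt (f := (⟪w, ·⟫)) (innerₛₗ ℝ w).isLinear (⟪w, x⟫ - r)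
  exact convexHull_min h hconv

theorem lt_infDist_of_forall_inner_add_lt {K : Set E} (hK : IsCompact K) (hKne : K.Nonempty)
    {w x : E} (hw : ‖w‖ ≤ 1) {r : ℝ} (h : ∀ y ∈ K, ⟪w, y⟫ + r < ⟪w, x⟫) :
    r < Metric.infDist x K := by
  obtain ⟨p, hpK, hp⟩ := hK.exists_infDist_eq_dist hKne x
  calc r < ⟪w, x - p⟫ := by rw [inner_sub_right]; linarith [h p hpK]
    _ ≤ ‖w‖ * ‖x - p‖ := real_inner_le_norm _ _
    _ ≤ ‖x - p‖ := mul_le_of_le_one_left (norm_nonneg _) hw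
    _ = Metric.infDist x K := by rw [hp, dist_eq_norm]

theorem exists_norm_eq_one_forall_inner_add_infDist_le {K : Set E} (hK : IsCompact K)
    (hKc : Convex ℝ K) (hKne : K.Nonempty) {x : E} (hx : 0 < Metric.infDist x K) :
    ∃ w : E, ‖w‖ = 1 ∧ ∀ y ∈ K, ⟪w, y⟫ + Metric.infDist x K ≤ ⟪w, x⟫ := by
  obtain ⟨v, hvK, hv⟩ := hK.exists_infDist_eq_dist hKne x
  rw [hv, dist_eq_norm] at hx ⊢
  have hproj : ∀ y ∈ K, ⟪x - v, y - v⟫ ≤ 0 := by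
    refine (norm_eq_iInf_iff_real_inner_le_zero hKc hvK).mp ?_
    simpa only [Metric.infDist_eq_iInf, dist_eq_norm] using hv.symm
  refine ⟨‖x - v‖⁻¹ • (x - v), by simp [norm_smul, hx.ne'], fun y hy ↦ ?_⟩
  have hxv : ⟪x - v, x - v⟫ = ‖x - v‖ ^ 2 := real_inner_self_eq_norm_sq _
  have hyv := hproj y hy
  simp only [real_inner_smul_left, inner_sub_right] at hyv hxv ⊢
  field_simp
  nlinarith

theorem lt_infDist_iff_exists_norm_eq_one {K : Set E} (hK : IsCompact K) (hKc : Convex ℝ K)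
    (hKne : K.Nonempty) {x : E} {r : ℝ} (hr : 0 ≤ r) :
    r < Metric.infDist x K ↔ ∃ w : E, ‖w‖ = 1 ∧ ∀ y ∈ K, ⟪w, y⟫ + r < ⟪w, x⟫ := by
  refine ⟨fun h ↦ ?_, fun ⟨w, hw, h⟩ ↦ lt_infDist_of_forall_inner_add_lt hK hKne hw.le h⟩
  obtain ⟨w, hw, hsupp⟩ :=
    exists_norm_eq_one_forall_inner_add_infDist_le hK hKc hKne (hr.trans_lt h)
  exact ⟨w, hw, fun y hy ↦ by linarith [hsupp y hy]⟩

theorem exists_margin_separator_iff {s : Set E} (hs : s.Nonempty) (hs1 : ∀ y ∈ s, ‖y‖ ≤ 1)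
    {x : E} (hx : ‖x‖ ≤ 1) {δ : ℝ} (hδ : 0 ≤ δ) :
    (∃ u w : E, ‖u‖ ≤ 1 ∧ ‖w‖ = 1 ∧ δ ≤ ⟪w, x + u⟫ ∧ ∀ y ∈ s, ⟪w, y + u⟫ < -δ) ↔
      ∃ w : E, ‖w‖ = 1 ∧ ∀ y ∈ s, ⟪w, y⟫ + 2 * δ < ⟪w, x⟫ := by
  constructor
  · rintro ⟨u, w, -, hw, hxu, hyu⟩
    refine ⟨w, hw, fun y hy ↦ ?_⟩
    have := hyu y hy
    rw [inner_add_right] at hxu this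
    linarith
  · rintro ⟨w, hw, h⟩
    obtain ⟨y₀, hy₀⟩ := hs
    have hwx : ⟪w, x⟫ ≤ 1 := (real_inner_le_norm w x).trans (by rw [hw, one_mul]; exact hx)
    have hwy₀ : -1 ≤ ⟪w, y₀⟫ := by
      have := neg_le_of_abs_le ((abs_real_inner_le_norm w y₀).trans (by rw [hw, one_mul]))
      linarith [hs1 y₀ hy₀]
    have hwy₀x := h y₀ hy₀
    have hww : ⟪w, w⟫ = 1 := by rw [real_inner_self_eq_norm_sq, hw, one_pow]
    refine ⟨(δ - ⟪w, x⟫) • w, w, ?_, hw, ?_, fun y hy ↦ ?_⟩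
    · rw [norm_smul, hw, mul_one, Real.norm_eq_abs, abs_le]
      constructor <;> linarith
    · rw [inner_add_right, real_inner_smul_right, hww]
      linarith
    · rw [inner_add_right, real_inner_smul_right, hww]
      linarith [h y hy]

theorem stmt_6_general (d : ℕ) (δ : ℝ) (hδ : 0 < δ)
    (N : Finset (EuclideanSpace ℝ (Fin d))) (hN : N.Nonempty)
    (hNnorm : ∀ y ∈ N, ‖y‖ ≤ 1)
    (x : EuclideanSpace ℝ (Fin d)) (hx : ‖x‖ ≤ 1) :
    Metric.infDist x (convexHull ℝ (N : Set (EuclideanSpace ℝ (Fin d)))) ≤ 2 * δ ↔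
      ¬ ∃ u w : EuclideanSpace ℝ (Fin d), ‖u‖ ≤ 1 ∧ ‖w‖ = 1 ∧
        δ ≤ ⟪w, x + u⟫ ∧ ∀ y ∈ N, ⟪w, y + u⟫ < -δ := by
  have hNne : (N : Set (EuclideanSpace ℝ (Fin d))).Nonempty := Finset.coe_nonempty.mpr hN
  rw [← not_lt, not_iff_not,
    lt_infDist_iff_exists_norm_eq_one (N.finite_toSet.isCompact_convexHull ℝ)
      (convex_convexHull ℝ _) (convexHull_nonempty_iff.mpr hNne) (by positivity)]
  simpa only [forall_mem_convexHull_inner_add_lt_iff, Finset.mem_coe] using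
    (exists_margin_separator_iff hNne hNnorm hx hδ.le).symm

/-- Characterization of the safe region for hyperplanes with margin `δ`:
`x` lies within Euclidean distance `2δ` of the convex hull of `N` if and only if no
hyperplane with margin `δ` (given by `u, w` with `‖u‖ ≤ 1`, `‖w‖ = 1`) separates `x`
positively from `N`. -/
theorem stmt_6 (d : ℕ) (hd : 0 < d) (δ : ℝ) (hδ : 0 < δ)
    (N : Finset (EuclideanSpace ℝ (Fin d))) (hN : N.Nonempty)
    (hNnorm : ∀ y ∈ N, ‖y‖ ≤ 1)
    (x : EuclideanSpace ℝ (Fin d)) (hx : ‖x‖ ≤ 1) :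
    Metric.infDist x (convexHull ℝ (N : Set (EuclideanSpace ℝ (Fin d)))) ≤ 2 * δ ↔
      ¬ ∃ u w : EuclideanSpace ℝ (Fin d), ‖u‖ ≤ 1 ∧ ‖w‖ = 1 ∧
        δ ≤ ⟪w, x + u⟫ ∧ ∀ y ∈ N, ⟪w, y + u⟫ < -δ :=
  stmt_6_general d δ hδ N hN hNnorm x hx
end
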